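/- arXiv:2504.12106 — 7 statements merged into one kernel-verified Lean document; each statement's English description precedes it below -/
import Mathlib

section
/- For every i ∈ I and every b ∈ 𝓑(∞) with ε*_i(b) > 0, the element ẽ*_i(b) again lies in 𝓑(∞). -/
open Finset

/-- Membership of `(s,t)` in the index set `𝓘 = {(s,t) : 1 ≤ s, 1 ≤ t ≤ n, s+t ≤ n+1}`
for type `Aₙ`. -/
def cellA (n : ℕ) (s t : ℤ) : Prop :=
  1 ≤ s ∧ 1 ≤ t ∧ t ≤ (n : ℤ) ∧ s + t ≤ (n : ℤ) + 1

instance (n : ℕ) (s t : ℤ) : Decidable (cellA n s t) := by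
  unfold cellA; infer_instance

/-- The type-`Aₙ` polyhedral realization `𝓑(∞)`: families of nonnegative integers,
vanishing outside `𝓘`, with `b_{s,t} ≥ b_{s+1,t-1}` for `s ≥ 1`, `2 ≤ t ≤ n`. -/
def BinfA (n : ℕ) : Set (ℤ → ℤ → ℤ) :=
  {b | (∀ s t, 0 ≤ b s t) ∧
       (∀ s t, ¬ cellA n s t → b s t = 0) ∧
       (∀ s t, 1 ≤ s → 2 ≤ t → t ≤ (n : ℤ) → b (s + 1) (t - 1) ≤ b s t)}

/-- The standard basis family `e_{s,t}` (zero if `(s,t) ∉ 𝓘`). -/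
def eA (n : ℕ) (s t : ℤ) : ℤ → ℤ → ℤ :=
  fun u v => if u = s ∧ v = t ∧ cellA n s t then 1 else 0

/-- `∂_{s,t}(b) = b_{s,t} − b_{s,t+1} − b_{s+1,t−1} + b_{s+1,t}`. -/
def dA (b : ℤ → ℤ → ℤ) (s t : ℤ) : ℤ :=
  b s t - b s (t + 1) - b (s + 1) (t - 1) + b (s + 1) t

/-- `∂*_{s,t}(b) = b_{s−1,t} − b_{s−1,t+1} − b_{s,t−1} + b_{s,t}`. -/
def dsA (b : ℤ → ℤ → ℤ) (s t : ℤ) : ℤ :=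
  b (s - 1) t - b (s - 1) (t + 1) - b s (t - 1) + b s t

/-- `Γ^{(i)}_k(b) = Σ_{s=k}^{n+1−i} ∂_{s,i}(b)`. -/
noncomputable def GamA (n : ℕ) (b : ℤ → ℤ → ℤ) (i k : ℤ) : ℤ :=
  ∑ s ∈ Finset.Icc k ((n : ℤ) + 1 - i), dA b s i

/-- `Γ*^{(i)}_k(b) = Σ_{t=1}^{k} ∂*_{t,i+1−t}(b)`. -/
noncomputable def GamSA (b : ℤ → ℤ → ℤ) (i k : ℤ) : ℤ :=
  ∑ t ∈ Finset.Icc (1 : ℤ) k, dsA b t (i + 1 - t)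

/-- `ε_i(b) = max_{1≤k≤n+1−i} Γ^{(i)}_k(b)`. -/
noncomputable def epsA (n : ℕ) (b : ℤ → ℤ → ℤ) (i : ℤ) : ℤ :=
  WithBot.unbotD 0 (((Finset.Icc (1 : ℤ) ((n : ℤ) + 1 - i)).image (GamA n b i)).max)

/-- `ε*_i(b) = max_{1≤k≤i} Γ*^{(i)}_k(b)`. -/
noncomputable def epsSA (b : ℤ → ℤ → ℤ) (i : ℤ) : ℤ :=
  WithBot.unbotD 0 (((Finset.Icc (1 : ℤ) i).image (GamSA b i)).max)

/-- `m_i(b)`: the smallest `k` attaining `ε_i(b)`. -/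
noncomputable def mA (n : ℕ) (b : ℤ → ℤ → ℤ) (i : ℤ) : ℤ :=
  WithTop.untopD 0 (((Finset.Icc (1 : ℤ) ((n : ℤ) + 1 - i)).filter
      (fun k => GamA n b i k = epsA n b i)).min)

/-- `m*_i(b)`: the smallest `k` attaining `ε*_i(b)`. -/
noncomputable def mSA (b : ℤ → ℤ → ℤ) (i : ℤ) : ℤ :=
  WithTop.untopD 0 (((Finset.Icc (1 : ℤ) i).filter (fun k => GamSA b i k = epsSA b i)).min)

/-- `M*_i(b)`: the largest `k` attaining `ε*_i(b)`. -/
noncomputable def MSA (b : ℤ → ℤ → ℤ) (i : ℤ) : ℤ :=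
  WithBot.unbotD 0 (((Finset.Icc (1 : ℤ) i).filter (fun k => GamSA b i k = epsSA b i)).max)

/-- `f̃_i(b) = b + e_{m_i(b),i}`. -/
noncomputable def fA (n : ℕ) (b : ℤ → ℤ → ℤ) (i : ℤ) : ℤ → ℤ → ℤ :=
  fun u v => b u v + eA n (mA n b i) i u v

/-- `f̃*_i(b) = b + Σ_{s=1}^{m*_i(b)} (e_{s,i+1−s} − e_{s−1,i+1−s})`. -/
noncomputable def fSA (n : ℕ) (b : ℤ → ℤ → ℤ) (i : ℤ) : ℤ → ℤ → ℤ :=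
  fun u v => b u v +
    ∑ s ∈ Finset.Icc (1 : ℤ) (mSA b i),
      (eA n s (i + 1 - s) u v - eA n (s - 1) (i + 1 - s) u v)

/-- `ẽ*_i(b) = b − Σ_{s=1}^{M*_i(b)} (e_{s,i+1−s} − e_{s−1,i+1−s})`. -/
noncomputable def eSA (n : ℕ) (b : ℤ → ℤ → ℤ) (i : ℤ) : ℤ → ℤ → ℤ :=
  fun u v => b u v -
    ∑ s ∈ Finset.Icc (1 : ℤ) (MSA b i),
      (eA n s (i + 1 - s) u v - eA n (s - 1) (i + 1 - s) u v)

lemma int_ind_from (a : ℤ) (P : ℤ → Prop) (h0 : P a)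
    (hs : ∀ c : ℤ, a ≤ c → P c → P (c + 1)) : ∀ c : ℤ, a ≤ c → P c := by
  intro c hc
  have h : ∀ d : ℕ, P (a + d) := by
    intro d
    induction d with
    | zero => simpa using h0
    | succ m ih =>
        have h2 := hs (a + m) (by omega) ih
        have e : a + (↑(m + 1) : ℤ) = a + ↑m + 1 := by push_cast; ring
        rwa [e]
  have e : c = a + (c - a).toNat := by omega
  rw [e]; exact h _

/-- if `ε*_i(b) > 0`, then `ẽ*_i(b)` again lies in `𝓑(∞)`. -/
theorem stmt2 (n : ℕ) (hn : 1 ≤ n) (i : ℤ) (hi1 : 1 ≤ i) (hin : i ≤ (n : ℤ))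
    (b : ℤ → ℤ → ℤ) (hb : b ∈ BinfA n) (heps : 0 < epsSA b i) :
    eSA n b i ∈ BinfA n := by
  -- telescoping formula for GamSA
  have hb0a : b 0 (i+1) = 0 := hb.2.1 0 (i+1) (by unfold cellA; omega)
  have hb0b : b 0 i = 0 := hb.2.1 0 i (by unfold cellA; omega)
  have hgam : ∀ k : ℤ, 0 ≤ k → GamSA b i k = b k (i+1-k) - b k (i-k) := by
    refine int_ind_from 0 (fun k => GamSA b i k = b k (i+1-k) - b k (i-k)) ?_ ?_
    · have he : Finset.Icc (1:ℤ) 0 = ∅ := Finset.Icc_eq_empty (by omega)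
      simp only [GamSA, he, Finset.sum_empty]
      rw [show i+1-(0:ℤ) = i+1 by ring, show i-(0:ℤ) = i by ring, hb0a, hb0b]
      ring
    · intro k hk ih
      have hins : Finset.Icc (1:ℤ) (k+1) = insert (k+1) (Finset.Icc 1 k) := by
        ext x; simp only [Finset.mem_Icc, Finset.mem_insert]; omega
      have hstep : GamSA b i (k+1) = dsA b (k+1) (i+1-(k+1)) + GamSA b i k := by
        simp only [GamSA]
        rw [hins, Finset.sum_insert (by simp only [Finset.mem_Icc]; omega)]
      rw [hstep, ih, dsA]
      rw [show k+1-1 = k by ring, show i+1-(k+1)+1 = i+1-k by ring,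
          show i+1-(k+1)-1 = i-(k+1) by ring, show i+1-(k+1) = i+1-k-1 by ring,
          show i-(k+1) = i-k-1 by ring]
      ring
  -- max facts
  have hTne : (Finset.Icc (1:ℤ) i).Nonempty := ⟨1, Finset.mem_Icc.mpr ⟨le_refl 1, hi1⟩⟩
  have himg : ((Finset.Icc (1:ℤ) i).image (GamSA b i)).Nonempty := hTne.image _
  have heps' : epsSA b i = ((Finset.Icc (1:ℤ) i).image (GamSA b i)).max' himg := by
    unfold epsSA
    rw [← Finset.coe_max' himg]
    simp
  have hle : ∀ k, 1 ≤ k → k ≤ i → GamSA b i k ≤ epsSA b i := by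
    intro k h1 h2
    rw [heps']
    exact Finset.le_max' _ _ (Finset.mem_image_of_mem _ (Finset.mem_Icc.mpr ⟨h1, h2⟩))
  have hSne : ((Finset.Icc (1:ℤ) i).filter (fun k => GamSA b i k = epsSA b i)).Nonempty := by
    have h := Finset.max'_mem _ himg
    rw [← heps'] at h
    obtain ⟨k, hk, hGk⟩ := Finset.mem_image.mp h
    exact ⟨k, Finset.mem_filter.mpr ⟨hk, hGk⟩⟩
  have hMSA' : MSA b i = ((Finset.Icc (1:ℤ) i).filter (fun k => GamSA b i k = epsSA b i)).max' hSne := by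
    unfold MSA
    rw [← Finset.coe_max' hSne]
    simp
  have hM_mem : MSA b i ∈ (Finset.Icc (1:ℤ) i).filter (fun k => GamSA b i k = epsSA b i) := by
    rw [hMSA']; exact Finset.max'_mem _ hSne
  obtain ⟨hM_Icc, hMG⟩ := Finset.mem_filter.mp hM_mem
  obtain ⟨hM1, hMi⟩ := Finset.mem_Icc.mp hM_Icc
  have hM_max : ∀ k ∈ (Finset.Icc (1:ℤ) i).filter (fun k => GamSA b i k = epsSA b i), k ≤ MSA b i := by
    intro k hk; rw [hMSA']; exact Finset.le_max' _ k hk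
  have hstrictG : MSA b i + 1 ≤ i → GamSA b i (MSA b i + 1) < epsSA b i := by
    intro h
    rcases lt_or_eq_of_le (hle _ (by omega) h) with h' | h'
    · exact h'
    · exfalso
      have := hM_max _ (Finset.mem_filter.mpr ⟨Finset.mem_Icc.mpr ⟨by omega, h⟩, h'⟩)
      omega
  -- A-value facts
  have hGM := hMG
  rw [hgam (MSA b i) (by omega)] at hGM
  have hA1 : 1 ≤ b (MSA b i) (i+1-MSA b i) := by
    have := hb.1 (MSA b i) (i - MSA b i)
    omega
  have Amono : ∀ a : ℤ, 1 ≤ a → ∀ c : ℤ, a ≤ c → c ≤ i → b c (i+1-c) ≤ b a (i+1-a) := by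
    intro a ha
    refine int_ind_from a (fun c => c ≤ i → b c (i+1-c) ≤ b a (i+1-a)) ?_ ?_
    · intro _; exact le_refl _
    · intro c hc ih hci
      have h1 := hb.2.2 c (i+1-c) (by omega) (by omega) (by omega)
      rw [show i+1-c-1 = i+1-(c+1) by ring] at h1
      exact le_trans h1 (ih (by omega))
  have hAlow : ∀ u : ℤ, 1 ≤ u → u ≤ MSA b i → 1 ≤ b u (i+1-u) := by
    intro u h1 h2
    have := Amono u h1 (MSA b i) h2 hMi
    omega
  have hAstrict : MSA b i + 1 ≤ i → b (MSA b i + 1) (i - MSA b i) + 1 ≤ b (MSA b i) (i+1-MSA b i) := by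
    intro hMi1
    have h1 := hstrictG hMi1
    rw [hgam (MSA b i + 1) (by omega)] at h1
    rw [show i+1-(MSA b i + 1) = i - MSA b i by ring,
        show i-(MSA b i + 1) = i - MSA b i - 1 by ring] at h1
    have hB : b (MSA b i + 1) (i - MSA b i - 1) ≤ b (MSA b i) (i - MSA b i) := by
      by_cases hc : MSA b i + 2 ≤ i
      · exact hb.2.2 (MSA b i) (i - MSA b i) (by omega) (by omega) (by omega)
      · have h0 : b (MSA b i + 1) (i - MSA b i - 1) = 0 :=
          hb.2.1 _ _ (by unfold cellA; omega)
        rw [h0]; exact hb.1 _ _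
    omega
  -- pointwise evaluation of the correction sum
  have hsum : ∀ u v : ℤ,
      (∑ s ∈ Finset.Icc (1:ℤ) (MSA b i),
        (eA n s (i + 1 - s) u v - eA n (s - 1) (i + 1 - s) u v))
      = (if u + v = i + 1 ∧ 1 ≤ u ∧ u ≤ MSA b i then (1:ℤ) else 0)
        - (if u + v = i ∧ 1 ≤ u ∧ u ≤ MSA b i - 1 then (1:ℤ) else 0) := by
    intro u v
    rw [Finset.sum_sub_distrib]
    have e1 : ∑ s ∈ Finset.Icc (1:ℤ) (MSA b i), eA n s (i + 1 - s) u v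
        = if u + v = i + 1 ∧ 1 ≤ u ∧ u ≤ MSA b i then (1:ℤ) else 0 := by
      have step : ∀ s ∈ Finset.Icc (1:ℤ) (MSA b i),
          eA n s (i + 1 - s) u v
            = if s = u then (if u + v = i + 1 then (1:ℤ) else 0) else 0 := by
        intro s hs
        rw [Finset.mem_Icc] at hs
        simp only [eA]
        by_cases h1 : s = u
        · by_cases h2 : u + v = i + 1
          · rw [if_pos ⟨h1.symm, by omega, ⟨hs.1, by omega, by omega, by omega⟩⟩,
                if_pos h1, if_pos h2]
          · rw [if_neg (by intro hc; exact h2 (by omega)), if_pos h1, if_neg h2]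
        · rw [if_neg (by intro hc; exact h1 hc.1.symm), if_neg h1]
      rw [Finset.sum_congr rfl step,
          Finset.sum_ite_eq' (Finset.Icc (1:ℤ) (MSA b i)) u
            (fun _ => if u + v = i + 1 then (1:ℤ) else 0)]
      simp only [Finset.mem_Icc]
      split_ifs <;> omega
    have e2 : ∑ s ∈ Finset.Icc (1:ℤ) (MSA b i), eA n (s - 1) (i + 1 - s) u v
        = if u + v = i ∧ 1 ≤ u ∧ u ≤ MSA b i - 1 then (1:ℤ) else 0 := by
      have step : ∀ s ∈ Finset.Icc (1:ℤ) (MSA b i),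
          eA n (s - 1) (i + 1 - s) u v
            = if s = u + 1 then (if u + v = i ∧ 1 ≤ u then (1:ℤ) else 0) else 0 := by
        intro s hs
        rw [Finset.mem_Icc] at hs
        simp only [eA]
        by_cases h1 : s = u + 1
        · by_cases h2 : u + v = i ∧ 1 ≤ u
          · rw [if_pos ⟨by omega, by omega, ⟨by omega, by omega, by omega, by omega⟩⟩,
                if_pos h1, if_pos h2]
          · rw [if_neg ?_, if_pos h1, if_neg h2]
            intro hc
            obtain ⟨ha, hv, hcell⟩ := hc
            obtain ⟨c1, c2, c3, c4⟩ := hcell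
            exact h2 ⟨by omega, by omega⟩
        · rw [if_neg ?_, if_neg h1]
          intro hc
          obtain ⟨ha, -, -⟩ := hc
          exact h1 (by omega)
      rw [Finset.sum_congr rfl step,
          Finset.sum_ite_eq' (Finset.Icc (1:ℤ) (MSA b i)) (u + 1)
            (fun _ => if u + v = i ∧ 1 ≤ u then (1:ℤ) else 0)]
      simp only [Finset.mem_Icc]
      split_ifs <;> omega
    rw [e1, e2]
  have heq : ∀ u v : ℤ, eSA n b i u v
      = b u v - ((if u + v = i + 1 ∧ 1 ≤ u ∧ u ≤ MSA b i then (1:ℤ) else 0)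
        - (if u + v = i ∧ 1 ≤ u ∧ u ≤ MSA b i - 1 then (1:ℤ) else 0)) := by
    intro u v
    simp only [eSA]
    rw [hsum u v]
  refine ⟨?_, ?_, ?_⟩
  · -- nonnegativity
    intro u v
    rw [heq u v]
    by_cases h1 : u + v = i + 1 ∧ 1 ≤ u ∧ u ≤ MSA b i
    · have hv : v = i + 1 - u := by omega
      subst hv
      have hA := hAlow u h1.2.1 h1.2.2
      rw [if_pos h1, if_neg (by omega)]
      omega
    · rw [if_neg h1]
      have hpos := hb.1 u v
      by_cases h2 : u + v = i ∧ 1 ≤ u ∧ u ≤ MSA b i - 1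
      · rw [if_pos h2]; omega
      · rw [if_neg h2]; omega
  · -- vanishing outside cells
    intro u v hnc
    have hz := hb.2.1 u v hnc
    unfold cellA at hnc
    rw [heq u v, hz, if_neg (fun h => hnc (by omega)), if_neg (fun h => hnc (by omega))]
    ring
  · -- the inequalities
    intro s t hs ht htn
    rw [heq, heq]
    by_cases hcase : s + t = i + 1 ∧ s = MSA b i
    · obtain ⟨h1, h2⟩ := hcase
      subst h2
      have hv : t = i + 1 - MSA b i := by omega
      subst hv
      have hstr := hAstrict (by omega)
      rw [show i + 1 - MSA b i - 1 = i - MSA b i by ring]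
      split_ifs <;> omega
    · have hbb := hb.2.2 s t hs ht htn
      split_ifs <;> omega
end

section
/- Let b ∈ 𝓑(∞), i ∈ I, and k = m*_i(b). If k = 1, then Γ*^{(i)}_1(f̃*_i(b)) = Γ*^{(i)}_1(b) + 1 and Γ*^{(i)}_s(f̃*_i(b)) = Γ*^{(i)}_s(b) for 2 ≤ s ≤ i. If k ≥ 2, then Γ*^{(i)}_s(f̃*_i(b)) = Γ*^{(i)}_s(b) + 2 for s < k, Γ*^{(i)}_k(f̃*_i(b)) = Γ*^{(i)}_k(b) + 1, and Γ*^{(i)}_s(f̃*_i(b)) = Γ*^{(i)}_s(b) for s > k. In particular, Γ*^{(i)}_{m*_i(b)}(f̃*_i(b)) = Γ*^{(i)}_{m*_i(b)}(b) + 1. -/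
open Finset

/-- The increment family added by `f̃*_i` when `m*_i(b) = k`, in closed form. -/
def deltaF (i k : ℤ) : ℤ → ℤ → ℤ := fun u v =>
  (if 1 ≤ u ∧ u ≤ k ∧ v = i + 1 - u then 1 else 0)
  - (if 1 ≤ u ∧ u ≤ k - 1 ∧ v = i - u then 1 else 0)

/-- Per-row change of `∂*` caused by `deltaF`. -/
def gF (k t : ℤ) : ℤ :=
  (if t = 1 then (if k = 1 then 1 else 2) else 0)
  + (if t = k ∧ 2 ≤ k then -1 else 0) + (if t = k + 1 then -1 else 0)

lemma sum_e_eq_deltaF (n : ℕ) (i k : ℤ) (hk1 : 1 ≤ k) (hki : k ≤ i)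
    (hin : i ≤ (n : ℤ)) (u v : ℤ) :
    (∑ s ∈ Finset.Icc (1 : ℤ) k,
      (eA n s (i + 1 - s) u v - eA n (s - 1) (i + 1 - s) u v)) = deltaF i k u v := by
  rw [Finset.sum_sub_distrib]
  have h1 : ∀ s ∈ Finset.Icc (1 : ℤ) k, eA n s (i + 1 - s) u v
      = if s = u then (if 1 ≤ u ∧ u ≤ k ∧ v = i + 1 - u then 1 else 0) else 0 := by
    intro s hs
    simp only [Finset.mem_Icc] at hs
    simp only [eA, cellA]
    split_ifs <;> omega
  have h2 : ∀ s ∈ Finset.Icc (1 : ℤ) k, eA n (s - 1) (i + 1 - s) u v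
      = if s = u + 1 then (if 1 ≤ u ∧ u ≤ k - 1 ∧ v = i - u then 1 else 0) else 0 := by
    intro s hs
    simp only [Finset.mem_Icc] at hs
    simp only [eA, cellA]
    split_ifs <;> omega
  rw [Finset.sum_congr rfl h1, Finset.sum_congr rfl h2,
    Finset.sum_ite_eq' _ u, Finset.sum_ite_eq' _ (u + 1)]
  simp only [deltaF, Finset.mem_Icc]
  split_ifs <;> omega

lemma dsA_deltaF (i k t : ℤ) (hk : 1 ≤ k) :
    dsA (deltaF i k) t (i + 1 - t) = gF k t := by
  have h1 : deltaF i k (t - 1) (i + 1 - t) = if 2 ≤ t ∧ t ≤ k then -1 else 0 := by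
    simp only [deltaF, and_true, true_and]; split_ifs <;> omega
  have h2 : deltaF i k (t - 1) (i + 1 - t + 1) = if 2 ≤ t ∧ t ≤ k + 1 then 1 else 0 := by
    simp only [deltaF, and_true, true_and]; split_ifs <;> omega
  have h3 : deltaF i k t (i + 1 - t - 1) = if 1 ≤ t ∧ t ≤ k - 1 then -1 else 0 := by
    simp only [deltaF, and_true, true_and]; split_ifs <;> omega
  have h4 : deltaF i k t (i + 1 - t) = if 1 ≤ t ∧ t ≤ k then 1 else 0 := by
    simp only [deltaF, and_true, true_and]; split_ifs <;> omega
  simp only [dsA]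
  rw [h1, h2, h3, h4]
  simp only [gF]
  split_ifs <;> omega

lemma sum_gF (k : ℤ) (hk : 1 ≤ k) : ∀ m : ℤ, 1 ≤ m →
    (∑ t ∈ Finset.Icc (1 : ℤ) m, gF k t) =
      (if m < k then 2 else 0) + (if m = k ∧ 2 ≤ k then 1 else 0)
        + (if m = k ∧ k = 1 then 1 else 0) := by
  refine Int.le_induction ?_ ?_
  · rw [show Finset.Icc (1 : ℤ) 1 = {1} by rfl, Finset.sum_singleton]
    simp only [gF]; split_ifs <;> omega
  · intro m hm ih
    have hins : Finset.Icc (1 : ℤ) (m + 1) = insert (m + 1) (Finset.Icc 1 m) := by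
      ext x; simp only [Finset.mem_Icc, Finset.mem_insert]; omega
    rw [hins, Finset.sum_insert (by simp only [Finset.mem_Icc]; omega), ih]
    simp only [gF]
    split_ifs <;> omega

lemma mSA_bounds (b : ℤ → ℤ → ℤ) (i : ℤ) (hi : 1 ≤ i) :
    1 ≤ mSA b i ∧ mSA b i ≤ i := by
  have hne : ((Finset.Icc (1 : ℤ) i).image (GamSA b i)).Nonempty :=
    (Finset.nonempty_Icc.mpr hi).image _
  obtain ⟨M, hM⟩ := Finset.max_of_nonempty hne
  obtain ⟨k0, hk0, hk0e⟩ := Finset.mem_image.mp (Finset.mem_of_max hM)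
  have heps : epsSA b i = M := by simp [epsSA, hM]
  have hFne : ((Finset.Icc (1 : ℤ) i).filter (fun k => GamSA b i k = epsSA b i)).Nonempty :=
    ⟨k0, Finset.mem_filter.mpr ⟨hk0, by rw [heps, hk0e]⟩⟩
  obtain ⟨m, hm⟩ := Finset.min_of_nonempty hFne
  have hmm := Finset.mem_of_min hm
  have hmeq : mSA b i = m := by simp [mSA, hm]
  rw [hmeq]
  have := (Finset.mem_filter.mp hmm).1
  simpa [Finset.mem_Icc] using this

lemma GamSA_fSA (n : ℕ) (i : ℤ) (b : ℤ → ℤ → ℤ) (hk1 : 1 ≤ mSA b i)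
    (hki : mSA b i ≤ i) (hin : i ≤ (n : ℤ)) (m : ℤ) (hm : 1 ≤ m) :
    GamSA (fSA n b i) i m = GamSA b i m +
      ((if m < mSA b i then 2 else 0) + (if m = mSA b i ∧ 2 ≤ mSA b i then 1 else 0)
        + (if m = mSA b i ∧ mSA b i = 1 then 1 else 0)) := by
  set k := mSA b i with hk
  have hfe : fSA n b i = fun u v => b u v + deltaF i k u v := by
    funext u v
    simp only [fSA]
    rw [sum_e_eq_deltaF n i k hk1 hki hin u v]
  rw [hfe]
  have hds : ∀ t ∈ Finset.Icc (1 : ℤ) m,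
      dsA (fun u v => b u v + deltaF i k u v) t (i + 1 - t)
        = dsA b t (i + 1 - t) + gF k t := by
    intro t _
    rw [← dsA_deltaF i k t hk1]
    simp only [dsA]; ring
  unfold GamSA
  rw [Finset.sum_congr rfl hds, Finset.sum_add_distrib, sum_gF k hk1 m hm]

/-- the effect of `f̃*_i` on the functions `Γ*^{(i)}_s`. -/
theorem stmt3 (n : ℕ) (hn : 1 ≤ n) (i : ℤ) (hi1 : 1 ≤ i) (hin : i ≤ (n : ℤ))
    (b : ℤ → ℤ → ℤ) (hb : b ∈ BinfA n) :
    (mSA b i = 1 →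
        GamSA (fSA n b i) i 1 = GamSA b i 1 + 1 ∧
        ∀ s : ℤ, 2 ≤ s → s ≤ i → GamSA (fSA n b i) i s = GamSA b i s) ∧
    (2 ≤ mSA b i →
        (∀ s : ℤ, 1 ≤ s → s < mSA b i → GamSA (fSA n b i) i s = GamSA b i s + 2) ∧
        GamSA (fSA n b i) i (mSA b i) = GamSA b i (mSA b i) + 1 ∧
        (∀ s : ℤ, mSA b i < s → s ≤ i → GamSA (fSA n b i) i s = GamSA b i s)) ∧
    GamSA (fSA n b i) i (mSA b i) = GamSA b i (mSA b i) + 1 := by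
  obtain ⟨hk1, hki⟩ := mSA_bounds b i hi1
  have H := GamSA_fSA n i b hk1 hki hin
  refine ⟨?_, ?_, ?_⟩
  · intro h1
    refine ⟨?_, ?_⟩
    · rw [H 1 le_rfl]; split_ifs <;> omega
    · intro s hs2 hsi; rw [H s (by omega)]; split_ifs <;> omega
  · intro h2
    refine ⟨?_, ?_, ?_⟩
    · intro s hs1 hsk; rw [H s hs1]; split_ifs <;> omega
    · rw [H _ hk1]; split_ifs <;> omega
    · intro s hks hsi; rw [H s (by omega)]; split_ifs <;> omega
  · rw [H _ hk1]; split_ifs <;> omega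
end

section
/- For b, b' ∈ 𝓑(∞) and i ∈ I, one has f̃*_i(b) = b' if and only if ε*_i(b') > 0 and ẽ*_i(b') = b. -/
open Finset

lemma sum_tel (g : ℤ → ℤ) (k : ℤ) (hk : 0 ≤ k) :
    ∑ t ∈ Finset.Icc (1:ℤ) k, (g t - g (t - 1)) = g k - g 0 := by
  refine Int.le_induction
    (motive := fun k _ => ∑ t ∈ Finset.Icc (1:ℤ) k, (g t - g (t - 1)) = g k - g 0) ?_ ?_ k hk
  · simp
  · intro k hk ih
    have hins : Finset.Icc (1:ℤ) (k + 1) = insert (k + 1) (Finset.Icc (1:ℤ) k) := by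
      ext x
      simp only [Finset.mem_Icc, Finset.mem_insert]
      omega
    have hnm : (k + 1) ∉ Finset.Icc (1:ℤ) k := by
      simp only [Finset.mem_Icc]
      omega
    rw [hins, Finset.sum_insert hnm, ih]
    have h : k + 1 - 1 = k := by ring
    rw [h]
    ring

lemma gam_formula (b : ℤ → ℤ → ℤ) (hb0 : ∀ v, b 0 v = 0) (i : ℤ) (k : ℤ) (hk : 0 ≤ k) :
    GamSA b i k = b k (i + 1 - k) - b k (i - k) := by
  have h : GamSA b i k = ∑ t ∈ Finset.Icc (1:ℤ) k,
      ((fun t => b t (i + 1 - t) - b t (i - t)) t -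
       (fun t => b t (i + 1 - t) - b t (i - t)) (t - 1)) := by
    unfold GamSA dsA
    apply Finset.sum_congr rfl
    intro t _
    have e1 : i + 1 - t + 1 = i + 1 - (t - 1) := by ring
    have e2 : i + 1 - t - 1 = i - t := by ring
    have e3 : i - (t - 1) = i + 1 - t := by ring
    simp only
    rw [e1, e2, e3]
    ring
  rw [h, sum_tel _ k hk]
  simp [hb0]

lemma eps_spec (b : ℤ → ℤ → ℤ) (i : ℤ) (hi : 1 ≤ i) :
    (∃ k ∈ Finset.Icc (1:ℤ) i, GamSA b i k = epsSA b i) ∧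
      ∀ k ∈ Finset.Icc (1:ℤ) i, GamSA b i k ≤ epsSA b i := by
  have hne : ((Finset.Icc (1:ℤ) i).image (GamSA b i)).Nonempty :=
    Finset.Nonempty.image ⟨1, Finset.mem_Icc.mpr ⟨le_refl _, hi⟩⟩ _
  obtain ⟨a, ha⟩ := Finset.max_of_nonempty hne
  have heq : epsSA b i = a := by unfold epsSA; rw [ha]; rfl
  constructor
  · obtain ⟨k, hk, hk2⟩ := Finset.mem_image.mp (Finset.mem_of_max ha)
    exact ⟨k, hk, by rw [hk2, heq]⟩
  · intro k hk
    have h := Finset.le_max (Finset.mem_image_of_mem (GamSA b i) hk)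
    rw [ha] at h
    rw [heq]
    exact_mod_cast h

lemma m_spec (b : ℤ → ℤ → ℤ) (i : ℤ) (hi : 1 ≤ i) :
    mSA b i ∈ Finset.Icc (1:ℤ) i ∧ GamSA b i (mSA b i) = epsSA b i ∧
      ∀ k ∈ Finset.Icc (1:ℤ) i, GamSA b i k = epsSA b i → mSA b i ≤ k := by
  obtain ⟨⟨k0, hk0, hk0e⟩, -⟩ := eps_spec b i hi
  have hne : ((Finset.Icc (1:ℤ) i).filter (fun k => GamSA b i k = epsSA b i)).Nonempty :=
    ⟨k0, Finset.mem_filter.mpr ⟨hk0, hk0e⟩⟩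
  obtain ⟨a, ha⟩ := Finset.min_of_nonempty hne
  have heq : mSA b i = a := by unfold mSA; rw [ha]; rfl
  have hmem := Finset.mem_filter.mp (Finset.mem_of_min ha)
  refine ⟨heq ▸ hmem.1, heq ▸ hmem.2, ?_⟩
  intro k hk hke
  have hkf : k ∈ (Finset.Icc (1:ℤ) i).filter (fun k => GamSA b i k = epsSA b i) :=
    Finset.mem_filter.mpr ⟨hk, hke⟩
  have h := Finset.min_le hkf
  rw [ha] at h
  rw [heq]
  exact_mod_cast h

lemma M_spec (b : ℤ → ℤ → ℤ) (i : ℤ) (hi : 1 ≤ i) :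
    MSA b i ∈ Finset.Icc (1:ℤ) i ∧ GamSA b i (MSA b i) = epsSA b i ∧
      ∀ k ∈ Finset.Icc (1:ℤ) i, GamSA b i k = epsSA b i → k ≤ MSA b i := by
  obtain ⟨⟨k0, hk0, hk0e⟩, -⟩ := eps_spec b i hi
  have hne : ((Finset.Icc (1:ℤ) i).filter (fun k => GamSA b i k = epsSA b i)).Nonempty :=
    ⟨k0, Finset.mem_filter.mpr ⟨hk0, hk0e⟩⟩
  obtain ⟨a, ha⟩ := Finset.max_of_nonempty hne
  have heq : MSA b i = a := by unfold MSA; rw [ha]; rfl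
  have hmem := Finset.mem_filter.mp (Finset.mem_of_max ha)
  refine ⟨heq ▸ hmem.1, heq ▸ hmem.2, ?_⟩
  intro k hk hke
  have hkf : k ∈ (Finset.Icc (1:ℤ) i).filter (fun k => GamSA b i k = epsSA b i) :=
    Finset.mem_filter.mpr ⟨hk, hke⟩
  have h := Finset.le_max hkf
  rw [ha] at h
  rw [heq]
  exact_mod_cast h

lemma delta_top (n : ℕ) (i m k : ℤ) (hin : i ≤ (n:ℤ)) (hmi : m ≤ i) (hk : 1 ≤ k) :
    ∑ s ∈ Finset.Icc (1:ℤ) m,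
      (eA n s (i + 1 - s) k (i + 1 - k) - eA n (s - 1) (i + 1 - s) k (i + 1 - k))
      = if k ≤ m then 1 else 0 := by
  have h2 : ∀ s : ℤ, eA n (s - 1) (i + 1 - s) k (i + 1 - k) = 0 := by
    intro s
    simp only [eA]
    rw [if_neg]
    rintro ⟨ha, hb, -⟩
    omega
  by_cases hkm : k ≤ m
  · rw [if_pos hkm, Finset.sum_eq_single_of_mem k (Finset.mem_Icc.mpr ⟨hk, hkm⟩)]
    · have hc : cellA n k (i + 1 - k) := by unfold cellA; omega
      have hcond : k = k ∧ i + 1 - k = i + 1 - k ∧ cellA n k (i + 1 - k) := ⟨rfl, rfl, hc⟩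
      have hval : eA n k (i + 1 - k) k (i + 1 - k) = 1 := by
        unfold eA
        exact if_pos hcond
      rw [h2, hval]
      ring
    · intro s hs hsk
      rw [h2]
      simp only [eA]
      rw [if_neg]
      · ring
      rintro ⟨ha, -, -⟩
      exact hsk ha.symm
  · rw [if_neg hkm]
    apply Finset.sum_eq_zero
    intro s hs
    rw [h2]
    simp only [eA]
    rw [if_neg]
    · ring
    rintro ⟨ha, -, -⟩
    rw [Finset.mem_Icc] at hs
    omega

lemma delta_bot (n : ℕ) (i m k : ℤ) (hi1 : 1 ≤ i) (hin : i ≤ (n:ℤ)) (hmi : m ≤ i)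
    (hk : 1 ≤ k) :
    ∑ s ∈ Finset.Icc (1:ℤ) m,
      (eA n s (i + 1 - s) k (i - k) - eA n (s - 1) (i + 1 - s) k (i - k))
      = if k ≤ m - 1 then -1 else 0 := by
  have h1 : ∀ s : ℤ, eA n s (i + 1 - s) k (i - k) = 0 := by
    intro s
    simp only [eA]
    rw [if_neg]
    rintro ⟨ha, hb, -⟩
    omega
  by_cases hkm : k ≤ m - 1
  · rw [if_pos hkm,
      Finset.sum_eq_single_of_mem (k + 1) (Finset.mem_Icc.mpr ⟨by omega, by omega⟩)]
    · have hc : cellA n (k + 1 - 1) (i + 1 - (k + 1)) := by unfold cellA; omega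
      have hcond : k = k + 1 - 1 ∧ i - k = i + 1 - (k + 1) ∧
          cellA n (k + 1 - 1) (i + 1 - (k + 1)) := ⟨by ring, by ring, hc⟩
      have hval : eA n (k + 1 - 1) (i + 1 - (k + 1)) k (i - k) = 1 := by
        unfold eA
        exact if_pos hcond
      rw [h1, hval]
      ring
    · intro s hs hsk
      rw [h1]
      simp only [eA]
      rw [if_neg]
      · ring
      rintro ⟨ha, -, -⟩
      omega
  · rw [if_neg hkm]
    apply Finset.sum_eq_zero
    intro s hs
    rw [h1]
    simp only [eA]
    rw [if_neg]
    · ring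
    rintro ⟨ha, -, -⟩
    rw [Finset.mem_Icc] at hs
    omega

/-- `f̃*_i(b) = b'` iff `ε*_i(b') > 0` and `ẽ*_i(b') = b`. -/
theorem stmt4 (n : ℕ) (hn : 1 ≤ n) (i : ℤ) (hi1 : 1 ≤ i) (hin : i ≤ (n : ℤ))
    (b b' : ℤ → ℤ → ℤ) (hb : b ∈ BinfA n) (hb' : b' ∈ BinfA n) :
    fSA n b i = b' ↔ (0 < epsSA b' i ∧ eSA n b' i = b) := by
  obtain ⟨hbpos, hbz, hbmono⟩ := hb
  obtain ⟨hb'pos, hb'z, hb'mono⟩ := hb'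
  have hb0 : ∀ v, b 0 v = 0 := fun v => hbz 0 v (by simp [cellA])
  have hb'0 : ∀ v, b' 0 v = 0 := fun v => hb'z 0 v (by simp [cellA])
  constructor
  · intro hf
    obtain ⟨hmmem, hmG, hmmin⟩ := m_spec b i hi1
    have hm1 : 1 ≤ mSA b i := (Finset.mem_Icc.mp hmmem).1
    have hmi : mSA b i ≤ i := (Finset.mem_Icc.mp hmmem).2
    obtain ⟨-, hle⟩ := eps_spec b i hi1
    have hrel : ∀ k, 1 ≤ k → GamSA b' i k = GamSA b i k
        + (if k ≤ mSA b i then 1 else 0) + (if k ≤ mSA b i - 1 then 1 else 0) := by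
      intro k hk
      rw [gam_formula b' hb'0 i k (by omega), gam_formula b hb0 i k (by omega), ← hf]
      simp only [fSA]
      rw [delta_top n i (mSA b i) k hin hmi hk, delta_bot n i (mSA b i) k hi1 hin hmi hk]
      split_ifs <;> ring
    have hGi0 : GamSA b i i = b i 1 := by
      rw [gam_formula b hb0 i i (by omega)]
      have e1 : i + 1 - i = 1 := by ring
      have e2 : i - i = 0 := by ring
      rw [e1, e2, hbz i 0 (by simp [cellA])]
      ring
    have heps0 : 0 ≤ epsSA b i := by
      have h := hle i (Finset.mem_Icc.mpr ⟨hi1, le_refl i⟩)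
      rw [hGi0] at h
      exact le_trans (hbpos i 1) h
    have hpm : GamSA b' i (mSA b i) = epsSA b i + 1 := by
      rw [hrel _ hm1, hmG, if_pos (le_refl _), if_neg (by omega)]
      ring
    obtain ⟨⟨k1, hk1mem, hk1⟩, hle'⟩ := eps_spec b' i hi1
    have heps' : epsSA b' i = epsSA b i + 1 := by
      have h1 : epsSA b i + 1 ≤ epsSA b' i := by
        rw [← hpm]; exact hle' _ hmmem
      have h2 : GamSA b' i k1 ≤ epsSA b i + 1 := by
        rw [hrel k1 (Finset.mem_Icc.mp hk1mem).1]
        by_cases hc : k1 < mSA b i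
        · have hne : GamSA b i k1 ≠ epsSA b i := fun hc2 => by
            have := hmmin k1 hk1mem hc2; omega
          have := hle k1 hk1mem
          split_ifs <;> omega
        · have := hle k1 hk1mem
          split_ifs <;> omega
      omega
    obtain ⟨hMmem, hMG, hMmax⟩ := M_spec b' i hi1
    have hMm : MSA b' i = mSA b i := by
      have h1 : mSA b i ≤ MSA b' i := hMmax _ hmmem (by rw [hpm, heps'])
      by_contra hne
      have h2 : mSA b i < MSA b' i := by omega
      have h3 := hrel (MSA b' i) (Finset.mem_Icc.mp hMmem).1
      rw [if_neg (by omega), if_neg (by omega), hMG, heps'] at h3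
      have h4 := hle (MSA b' i) hMmem
      omega
    refine ⟨by omega, ?_⟩
    funext u v
    simp only [eSA]
    rw [hMm, ← hf]
    simp only [fSA]
    ring
  · rintro ⟨hpos, he⟩
    obtain ⟨hMmem, hMG, hMmax⟩ := M_spec b' i hi1
    have hM1 : 1 ≤ MSA b' i := (Finset.mem_Icc.mp hMmem).1
    have hMi : MSA b' i ≤ i := (Finset.mem_Icc.mp hMmem).2
    obtain ⟨-, hle'⟩ := eps_spec b' i hi1
    have hrel : ∀ k, 1 ≤ k → GamSA b i k = GamSA b' i k
        - (if k ≤ MSA b' i then 1 else 0) - (if k ≤ MSA b' i - 1 then 1 else 0) := by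
      intro k hk
      rw [gam_formula b hb0 i k (by omega), gam_formula b' hb'0 i k (by omega), ← he]
      simp only [eSA]
      rw [delta_top n i (MSA b' i) k hin hMi hk, delta_bot n i (MSA b' i) k hi1 hin hMi hk]
      split_ifs <;> ring
    have hstrict : ∀ k ∈ Finset.Icc (1:ℤ) i, MSA b' i < k →
        GamSA b' i k ≤ epsSA b' i - 1 := by
      intro k hk hlt
      have h1 := hle' k hk
      have h2 : GamSA b' i k ≠ epsSA b' i := fun hc => by
        have := hMmax k hk hc; omega
      omega
    obtain ⟨⟨k0, hk0mem, hk0⟩, hle⟩ := eps_spec b i hi1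
    have hGM : GamSA b i (MSA b' i) = epsSA b' i - 1 := by
      rw [hrel _ hM1, if_pos (le_refl _), if_neg (by omega), hMG]
      ring
    have heps : epsSA b i = epsSA b' i - 1 := by
      have h1 : epsSA b' i - 1 ≤ epsSA b i := by
        rw [← hGM]; exact hle _ hMmem
      have h2 : GamSA b i k0 ≤ epsSA b' i - 1 := by
        rcases lt_trichotomy k0 (MSA b' i) with h | h | h
        · rw [hrel _ (Finset.mem_Icc.mp hk0mem).1, if_pos (by omega), if_pos (by omega)]
          have := hle' k0 hk0mem
          omega
        · rw [h, hGM]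
        · rw [hrel _ (Finset.mem_Icc.mp hk0mem).1, if_neg (by omega), if_neg (by omega)]
          have := hstrict k0 hk0mem h
          omega
      omega
    obtain ⟨hmmem, hmG, hmmin⟩ := m_spec b i hi1
    have hmM : mSA b i = MSA b' i := by
      have h1 : mSA b i ≤ MSA b' i := hmmin _ hMmem (by rw [hGM, heps])
      by_contra hne
      have h2 : mSA b i < MSA b' i := by omega
      have h3 := hrel (mSA b i) (Finset.mem_Icc.mp hmmem).1
      rw [if_pos (by omega), if_pos (by omega), hmG, heps] at h3
      have h4 := hle' (mSA b i) hmmem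
      omega
    funext u v
    simp only [fSA]
    rw [hmM, ← he]
    simp only [eSA]
    ring
end

section
/- If b ∈ 𝓑(∞) satisfies ε*_i(b) = 0 for every i ∈ I, then b is the zero family, i.e. b_{s,t} = 0 for all s ≥ 1 and t ∈ I. -/
open Finset

lemma gamSA_telescope (b : ℤ → ℤ → ℤ) (hb0 : ∀ v, b 0 v = 0) (i : ℤ) :
    ∀ k : ℤ, 1 ≤ k → GamSA b i k = b k (i + 1 - k) - b k (i - k) := by
  refine Int.le_induction ?_ ?_
  · simp only [GamSA, Finset.Icc_self, Finset.sum_singleton, dsA]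
    have h1 : (1:ℤ) - 1 = 0 := by ring
    rw [h1, hb0, hb0]
    ring_nf
  · intro k hk ih
    have hnot : k + 1 ∉ Finset.Icc (1:ℤ) k := by simp
    have hins : Finset.Icc (1:ℤ) (k+1) = insert (k+1) (Finset.Icc (1:ℤ) k) := by
      ext x; simp only [Finset.mem_Icc, Finset.mem_insert]; omega
    have hsum : GamSA b i (k + 1) = GamSA b i k + dsA b (k + 1) (i + 1 - (k + 1)) := by
      unfold GamSA
      rw [hins, Finset.sum_insert hnot]
      ring
    rw [hsum, ih, dsA]
    have e1 : k + 1 - 1 = k := by ring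
    have e3 : i + 1 - (k + 1) + 1 = i + 1 - k := by ring
    have e4 : i + 1 - (k + 1) - 1 = i - (k + 1) := by ring
    rw [e1, e3, e4]
    ring

/-- if `ε*_i(b) = 0` for all `i ∈ I`, then `b` is the zero family. -/
theorem stmt6 (n : ℕ) (hn : 1 ≤ n) (b : ℤ → ℤ → ℤ) (hb : b ∈ BinfA n)
    (h0 : ∀ i : ℤ, 1 ≤ i → i ≤ (n : ℤ) → epsSA b i = 0) :
    ∀ s t : ℤ, 1 ≤ s → 1 ≤ t → t ≤ (n : ℤ) → b s t = 0 := by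
  obtain ⟨hpos, hvan, _⟩ := hb
  have hb0 : ∀ v, b 0 v = 0 := by
    intro v; apply hvan; intro h; exact absurd h.1 (by norm_num)
  have hbt0 : ∀ s, b s 0 = 0 := by
    intro s; apply hvan; intro h; exact absurd h.2.1 (by norm_num)
  have hgam : ∀ i k : ℤ, 1 ≤ i → i ≤ (n : ℤ) → 1 ≤ k → k ≤ i → GamSA b i k ≤ 0 := by
    intro i k hi1 hin hk1 hki
    have hmem : GamSA b i k ∈ (Finset.Icc (1:ℤ) i).image (GamSA b i) :=
      Finset.mem_image_of_mem _ (Finset.mem_Icc.2 ⟨hk1, hki⟩)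
    have hle := Finset.le_max hmem
    have heps := h0 i hi1 hin
    unfold epsSA at heps
    cases hmax : ((Finset.Icc (1:ℤ) i).image (GamSA b i)).max with
    | bot => rw [hmax] at hle; exact absurd hle (by simp)
    | coe m =>
        rw [hmax] at hle heps
        simp only [WithBot.unbotD_coe] at heps
        rw [heps] at hle
        exact_mod_cast hle
  have hdec : ∀ s t : ℤ, 1 ≤ s → 1 ≤ t → s + t ≤ (n : ℤ) + 1 → b s t ≤ b s (t - 1) := by
    intro s t hs ht hst
    have hi1 : 1 ≤ s + t - 1 := by omega
    have hin : s + t - 1 ≤ (n : ℤ) := by omega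
    have h := hgam (s + t - 1) s hi1 hin hs (by omega)
    rw [gamSA_telescope b hb0 _ s hs] at h
    have e1 : s + t - 1 + 1 - s = t := by ring
    have e2 : s + t - 1 - s = t - 1 := by ring
    rw [e1, e2] at h
    linarith
  have hle0 : ∀ t : ℤ, 0 ≤ t → ∀ s : ℤ, 1 ≤ s → s + t ≤ (n : ℤ) + 1 → b s t ≤ 0 := by
    refine Int.le_induction ?_ ?_
    · intro s _ _; rw [hbt0]
    · intro t ht ih s hs hst
      have h1 := hdec s (t + 1) hs (by omega) hst
      have h2 := ih s hs (by omega)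
      simp only [add_sub_cancel_right] at h1
      linarith
  intro s t hs ht htn
  by_cases hst : s + t ≤ (n : ℤ) + 1
  · exact le_antisymm (hle0 t (by omega) s hs hst) (hpos s t)
  · apply hvan; intro h; exact hst h.2.2.2
end

section
/- For every i ∈ I and b ∈ 𝓑(∞): ⟨h_i, wt(b)⟩ = −Γ^{(i)}_1(b) − Γ*^{(i)}_1(b); consequently jump_i(b) = (ε_i(b) − Γ^{(i)}_1(b)) + (ε*_i(b) − Γ*^{(i)}_1(b)), and in particular jump_i(b) ≥ 0. -/
open Finset

/-- The Cartan matrix entry `a_{i,t}` of type `Aₙ`. -/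
def cartanA (i t : ℤ) : ℤ :=
  if i = t then 2 else if t = i + 1 ∨ i = t + 1 then -1 else 0

/-- `⟨h_i, wt(b)⟩ = −Σ_{s≥1, t∈I} a_{it} b_{s,t}` (the sum is supported in `1 ≤ s,t ≤ n`). -/
noncomputable def hwtA (n : ℕ) (b : ℤ → ℤ → ℤ) (i : ℤ) : ℤ :=
  -∑ s ∈ Finset.Icc (1 : ℤ) (n : ℤ), ∑ t ∈ Finset.Icc (1 : ℤ) (n : ℤ),
      cartanA i t * b s t

/-- `jump_i(b) = ε_i(b) + ε*_i(b) + ⟨h_i, wt(b)⟩`. -/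
noncomputable def jumpA (n : ℕ) (b : ℤ → ℤ → ℤ) (i : ℤ) : ℤ :=
  epsA n b i + epsSA b i + hwtA n b i

lemma myLeMaxUnbot {s : Finset ℤ} {a : ℤ} (ha : a ∈ s) : a ≤ WithBot.unbotD 0 s.max := by
  rcases Finset.max_of_mem ha with ⟨m, hm⟩
  have h := Finset.le_max ha
  rw [hm] at h ⊢
  simpa using h

/-- `⟨h_i, wt(b)⟩ = −Γ^{(i)}_1(b) − Γ*^{(i)}_1(b)`, hence
`jump_i(b) = (ε_i(b) − Γ^{(i)}_1(b)) + (ε*_i(b) − Γ*^{(i)}_1(b)) ≥ 0`. -/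
theorem stmt7 (n : ℕ) (hn : 1 ≤ n) (i : ℤ) (hi1 : 1 ≤ i) (hin : i ≤ (n : ℤ))
    (b : ℤ → ℤ → ℤ) (hb : b ∈ BinfA n) :
    hwtA n b i = -GamA n b i 1 - GamSA b i 1 ∧
    jumpA n b i = (epsA n b i - GamA n b i 1) + (epsSA b i - GamSA b i 1) ∧
    0 ≤ jumpA n b i := by
  obtain ⟨hpos, hzero, hmon⟩ := hb
  have hvan : ∀ s t : ℤ, s ≤ 0 ∨ t ≤ 0 ∨ (n:ℤ) < t ∨ (n:ℤ)+1 < s + t → b s t = 0 := by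
    intro s t h
    exact hzero s t (by unfold cellA; omega)
  set N : ℤ := (n:ℤ) + 1 - i with hNdef
  have hN : 1 ≤ N := by omega
  -- the big sum T t
  set T : ℤ → ℤ := fun t => ∑ s ∈ Finset.Icc (1:ℤ) ((n:ℤ)+1), b s t with hT
  -- sums over Icc 1 n equal T
  have hST : ∀ t : ℤ, ∑ s ∈ Finset.Icc (1:ℤ) (n:ℤ), b s t = T t := by
    intro t
    refine (Finset.sum_subset (Finset.Icc_subset_Icc le_rfl (by omega)) ?_)
    intro s hs hs'
    simp only [Finset.mem_Icc] at hs hs'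
    exact hvan s t (by omega)
  -- Step A : hwtA
  have inner : ∀ s : ℤ, ∑ t ∈ Finset.Icc (1:ℤ) (n:ℤ), cartanA i t * b s t
      = 2 * b s i - b s (i+1) - b s (i-1) := by
    intro s
    have hsplit : ∀ t : ℤ, cartanA i t * b s t =
        (if t = i then 2 * b s t else 0) - (if t = i+1 then b s t else 0)
          - (if t = i-1 then b s t else 0) := by
      intro t
      unfold cartanA
      split_ifs <;> omega
    rw [Finset.sum_congr rfl (fun t _ => hsplit t), Finset.sum_sub_distrib,
      Finset.sum_sub_distrib, Finset.sum_ite_eq', Finset.sum_ite_eq', Finset.sum_ite_eq']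
    have h1 : (if i ∈ Finset.Icc (1:ℤ) (n:ℤ) then 2 * b s i else 0) = 2 * b s i := by
      rw [if_pos (Finset.mem_Icc.mpr ⟨hi1, hin⟩)]
    have h2 : (if i+1 ∈ Finset.Icc (1:ℤ) (n:ℤ) then b s (i+1) else 0) = b s (i+1) := by
      by_cases h : i + 1 ≤ (n:ℤ)
      · rw [if_pos (Finset.mem_Icc.mpr ⟨by omega, h⟩)]
      · rw [if_neg (by simp only [Finset.mem_Icc]; omega), hvan s (i+1) (by omega)]
    have h3 : (if i-1 ∈ Finset.Icc (1:ℤ) (n:ℤ) then b s (i-1) else 0) = b s (i-1) := by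
      by_cases h : 1 ≤ i - 1
      · rw [if_pos (Finset.mem_Icc.mpr ⟨h, by omega⟩)]
      · rw [if_neg (by simp only [Finset.mem_Icc]; omega), hvan s (i-1) (by omega)]
    rw [h1, h2, h3]
  have hwt : hwtA n b i = -(2 * T i - T (i+1) - T (i-1)) := by
    unfold hwtA
    rw [Finset.sum_congr rfl (fun s _ => inner s)]
    rw [Finset.sum_sub_distrib, Finset.sum_sub_distrib, ← Finset.mul_sum]
    rw [hST i, hST (i+1), hST (i-1)]
  -- Step B : GamA n b i 1
  have reindex : ∀ t : ℤ, ∑ s ∈ Finset.Icc (1:ℤ) N, b (s+1) t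
      = ∑ s ∈ Finset.Icc (2:ℤ) (N+1), b s t := by
    intro t
    rw [show Finset.Icc (2:ℤ) (N+1) = (Finset.Icc (1:ℤ) N).map (addRightEmbedding 1) by
      rw [Finset.map_add_right_Icc]; norm_num, Finset.sum_map]
    rfl
  have hA1 : ∑ s ∈ Finset.Icc (1:ℤ) N, b s i = T i := by
    refine Finset.sum_subset (Finset.Icc_subset_Icc le_rfl (by omega)) ?_
    intro s hs hs'
    simp only [Finset.mem_Icc] at hs hs'
    exact hvan s i (by omega)
  have hA2 : ∑ s ∈ Finset.Icc (1:ℤ) N, b s (i+1) = T (i+1) := by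
    refine Finset.sum_subset (Finset.Icc_subset_Icc le_rfl (by omega)) ?_
    intro s hs hs'
    simp only [Finset.mem_Icc] at hs hs'
    exact hvan s (i+1) (by omega)
  have hins : Finset.Icc (1:ℤ) ((n:ℤ)+1) = insert 1 (Finset.Icc (2:ℤ) ((n:ℤ)+1)) := by
    ext x
    simp only [Finset.mem_Icc, Finset.mem_insert]
    omega
  have hone : (1:ℤ) ∉ Finset.Icc (2:ℤ) ((n:ℤ)+1) := by
    simp only [Finset.mem_Icc]; omega
  have hA3 : ∑ s ∈ Finset.Icc (1:ℤ) N, b (s+1) (i-1) = T (i-1) - b 1 (i-1) := by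
    rw [reindex]
    have : ∑ s ∈ Finset.Icc (2:ℤ) (N+1), b s (i-1)
        = ∑ s ∈ Finset.Icc (2:ℤ) ((n:ℤ)+1), b s (i-1) := by
      refine Finset.sum_subset (Finset.Icc_subset_Icc le_rfl (by omega)) ?_
      intro s hs hs'
      simp only [Finset.mem_Icc] at hs hs'
      exact hvan s (i-1) (by omega)
    rw [this, hT]
    simp only [hins, Finset.sum_insert hone]
    ring
  have hA4 : ∑ s ∈ Finset.Icc (1:ℤ) N, b (s+1) i = T i - b 1 i := by
    rw [reindex]
    have : ∑ s ∈ Finset.Icc (2:ℤ) (N+1), b s i = ∑ s ∈ Finset.Icc (2:ℤ) ((n:ℤ)+1), b s i := by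
      refine Finset.sum_subset (Finset.Icc_subset_Icc le_rfl (by omega)) ?_
      intro s hs hs'
      simp only [Finset.mem_Icc] at hs hs'
      exact hvan s i (by omega)
    rw [this, hT]
    simp only [hins, Finset.sum_insert hone]
    ring
  have hGam : GamA n b i 1 = 2 * T i - T (i+1) - T (i-1) + b 1 (i-1) - b 1 i := by
    unfold GamA dA
    rw [show (n:ℤ) + 1 - i = N from rfl]
    have : ∀ s ∈ Finset.Icc (1:ℤ) N,
        b s i - b s (i+1) - b (s+1) (i-1) + b (s+1) i
        = (b s i - b s (i+1)) - b (s+1) (i-1) + b (s+1) i := fun s _ => by ring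
    rw [Finset.sum_congr rfl this, Finset.sum_add_distrib, Finset.sum_sub_distrib,
      Finset.sum_sub_distrib, hA1, hA2, hA3, hA4]
    ring
  -- Step C : GamSA b i 1
  have hGamS : GamSA b i 1 = b 1 i - b 1 (i-1) := by
    unfold GamSA dsA
    rw [Finset.Icc_self, Finset.sum_singleton]
    rw [hvan (1-1) (i+1-1) (by omega), hvan (1-1) (i+1-1+1) (by omega)]
    have : i + 1 - 1 = i := by ring
    rw [this]
    ring
  have key : hwtA n b i = -GamA n b i 1 - GamSA b i 1 := by
    rw [hwt, hGam, hGamS]; ring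
  -- Step E : eps bounds
  have heps : GamA n b i 1 ≤ epsA n b i := by
    unfold epsA
    exact myLeMaxUnbot (Finset.mem_image_of_mem _ (Finset.mem_Icc.mpr ⟨le_rfl, by omega⟩))
  have hepsS : GamSA b i 1 ≤ epsSA b i := by
    unfold epsSA
    exact myLeMaxUnbot (Finset.mem_image_of_mem _ (Finset.mem_Icc.mpr ⟨le_rfl, hi1⟩))
  refine ⟨key, ?_, ?_⟩
  · unfold jumpA; rw [key]; ring
  · unfold jumpA; rw [key]; omega
end

section
/- For i ∈ I and b ∈ 𝓑(∞), if jump_i(b) = 0 then m_i(b) = 1 and m*_i(b) = 1, and f̃_i(b) = f̃*_i(b) = b + e_{1,i}. -/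
open Finset

lemma tele8 (g : ℤ → ℤ) (m : ℕ) :
    ∑ s ∈ Finset.Icc (1:ℤ) (m:ℤ), (g s - g (s+1)) = g 1 - g ((m:ℤ)+1) := by
  induction m with
  | zero => simp
  | succ k ih =>
    have h : Finset.Icc (1:ℤ) ((k:ℤ)+1) = insert ((k:ℤ)+1) (Finset.Icc (1:ℤ) (k:ℤ)) := by
      ext x; simp [Finset.mem_Icc, Finset.mem_insert]; omega
    push_cast
    rw [h, Finset.sum_insert (by simp), ih]; ring

lemma cart_sum8 (n : ℕ) (b : ℤ → ℤ → ℤ) (hz : ∀ s t, ¬ cellA n s t → b s t = 0)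
    (i : ℤ) (hi1 : 1 ≤ i) (hin : i ≤ (n:ℤ)) (s : ℤ) :
    ∑ t ∈ Finset.Icc (1:ℤ) (n:ℤ), cartanA i t * b s t
      = 2 * b s i - b s (i-1) - b s (i+1) := by
  have h0 : b s 0 = 0 := hz s 0 (by simp [cellA])
  have hN : b s ((n:ℤ)+1) = 0 := hz s ((n:ℤ)+1) (by simp [cellA] <;> omega)
  have hpt : ∀ t ∈ Finset.Icc (1:ℤ) (n:ℤ), cartanA i t * b s t =
      (if i = t then 2 * b s t else 0) +
      ((if i-1 = t then -b s t else 0) + (if i+1 = t then -b s t else 0)) := by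
    intro t _
    simp only [cartanA]
    split_ifs
    all_goals omega
  rw [Finset.sum_congr rfl hpt, Finset.sum_add_distrib, Finset.sum_add_distrib,
      Finset.sum_ite_eq, Finset.sum_ite_eq, Finset.sum_ite_eq,
      if_pos (Finset.mem_Icc.mpr ⟨hi1, hin⟩)]
  by_cases e1 : (2:ℤ) ≤ i <;> by_cases e2 : i ≤ (n:ℤ) - 1
  · rw [if_pos (Finset.mem_Icc.mpr ⟨by omega, by omega⟩),
        if_pos (Finset.mem_Icc.mpr ⟨by omega, by omega⟩)]; ring
  · rw [if_pos (Finset.mem_Icc.mpr ⟨by omega, by omega⟩),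
        if_neg (by simp [Finset.mem_Icc] <;> omega)]
    have hi : i + 1 = (n:ℤ) + 1 := by omega
    rw [hi, hN]; ring
  · rw [if_neg (by simp [Finset.mem_Icc] <;> omega),
        if_pos (Finset.mem_Icc.mpr ⟨by omega, by omega⟩)]
    have hi : i - 1 = (0:ℤ) := by omega
    rw [hi, h0]; ring
  · rw [if_neg (by simp [Finset.mem_Icc] <;> omega),
        if_neg (by simp [Finset.mem_Icc] <;> omega)]
    have hi : i - 1 = (0:ℤ) := by omega
    have hi' : i + 1 = (n:ℤ) + 1 := by omega
    rw [hi, hi', h0, hN]; ring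

lemma gam_ext8 (n : ℕ) (b : ℤ → ℤ → ℤ) (hz : ∀ s t, ¬ cellA n s t → b s t = 0)
    (i : ℤ) (hi1 : 1 ≤ i) :
    ∑ s ∈ Finset.Icc (1:ℤ) ((n:ℤ) + 1 - i), dA b s i
      = ∑ s ∈ Finset.Icc (1:ℤ) (n:ℤ), dA b s i := by
  apply Finset.sum_subset
  · intro x hx; simp [Finset.mem_Icc] at *; omega
  · intro x hx hx'
    simp [Finset.mem_Icc] at hx hx'
    have hb1 : b x i = 0 := hz _ _ (by simp [cellA] <;> omega)
    have hb2 : b x (i+1) = 0 := hz _ _ (by simp [cellA] <;> omega)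
    have hb3 : b (x+1) (i-1) = 0 := hz _ _ (by simp [cellA] <;> omega)
    have hb4 : b (x+1) i = 0 := hz _ _ (by simp [cellA] <;> omega)
    unfold dA; rw [hb1, hb2, hb3, hb4]; ring

/-- if `jump_i(b) = 0` then `m_i(b) = 1`, `m*_i(b) = 1`, and
`f̃_i(b) = f̃*_i(b) = b + e_{1,i}`. -/
theorem stmt8 (n : ℕ) (hn : 1 ≤ n) (i : ℤ) (hi1 : 1 ≤ i) (hin : i ≤ (n : ℤ))
    (b : ℤ → ℤ → ℤ) (hb : b ∈ BinfA n) (hj : jumpA n b i = 0) :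
    mA n b i = 1 ∧ mSA b i = 1 ∧ fA n b i = fSA n b i ∧
    fA n b i = fun u v => b u v + eA n 1 i u v := by
  obtain ⟨hpos, hz, hineq⟩ := hb
  have key1 : GamA n b i 1 + hwtA n b i = b 1 (i-1) - b 1 i := by
    have e1 : GamA n b i 1 = ∑ s ∈ Finset.Icc (1:ℤ) (n:ℤ), dA b s i :=
      gam_ext8 n b hz i hi1
    have e2 : hwtA n b i
        = -∑ s ∈ Finset.Icc (1:ℤ) (n:ℤ), (2 * b s i - b s (i-1) - b s (i+1)) := by
      unfold hwtA
      rw [Finset.sum_congr rfl (fun s _ => cart_sum8 n b hz i hi1 hin s)]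
    rw [e1, e2, ← sub_eq_add_neg, ← Finset.sum_sub_distrib]
    have e3 : ∀ s ∈ Finset.Icc (1:ℤ) (n:ℤ),
        dA b s i - (2 * b s i - b s (i-1) - b s (i+1)) =
        (fun s => b s (i-1) - b s i) s - (fun s => b s (i-1) - b s i) (s+1) := by
      intro s _; simp only [dA]; ring
    rw [Finset.sum_congr rfl e3, tele8]
    have z1 : b ((n:ℤ)+1) (i-1) = 0 := hz _ _ (by simp [cellA] <;> omega)
    have z2 : b ((n:ℤ)+1) i = 0 := hz _ _ (by simp [cellA] <;> omega)
    show b 1 (i-1) - b 1 i - (b ((n:ℤ)+1) (i-1) - b ((n:ℤ)+1) i) = b 1 (i-1) - b 1 i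
    rw [z1, z2]; ring
  have key2 : GamSA b i 1 = b 1 i - b 1 (i-1) := by
    unfold GamSA dsA
    rw [Finset.Icc_self, Finset.sum_singleton]
    have a1 : i + 1 - 1 = i := by ring
    rw [a1, show (1:ℤ) - 1 = 0 from rfl]
    have z1 : b 0 i = 0 := hz _ _ (by simp [cellA])
    have z2 : b 0 (i+1) = 0 := hz _ _ (by simp [cellA])
    rw [z1, z2]; ring
  have h1mem : (1:ℤ) ∈ Finset.Icc (1:ℤ) ((n:ℤ)+1-i) :=
    Finset.mem_Icc.mpr ⟨le_refl 1, by omega⟩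
  have h1mem' : (1:ℤ) ∈ Finset.Icc (1:ℤ) i := Finset.mem_Icc.mpr ⟨le_refl 1, hi1⟩
  have hSne : ((Finset.Icc (1:ℤ) ((n:ℤ)+1-i)).image (GamA n b i)).Nonempty :=
    ⟨_, Finset.mem_image_of_mem _ h1mem⟩
  have hTne : ((Finset.Icc (1:ℤ) i).image (GamSA b i)).Nonempty :=
    ⟨_, Finset.mem_image_of_mem _ h1mem'⟩
  have hepsA : epsA n b i
      = ((Finset.Icc (1:ℤ) ((n:ℤ)+1-i)).image (GamA n b i)).max' hSne := by
    unfold epsA; rw [← Finset.coe_max' hSne, WithBot.unbotD_coe]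
  have hepsS : epsSA b i = ((Finset.Icc (1:ℤ) i).image (GamSA b i)).max' hTne := by
    unfold epsSA; rw [← Finset.coe_max' hTne, WithBot.unbotD_coe]
  have hle : GamA n b i 1 ≤ epsA n b i := by
    rw [hepsA]; exact Finset.le_max' _ _ (Finset.mem_image_of_mem _ h1mem)
  have hle' : GamSA b i 1 ≤ epsSA b i := by
    rw [hepsS]; exact Finset.le_max' _ _ (Finset.mem_image_of_mem _ h1mem')
  unfold jumpA at hj
  have hG1 : GamA n b i 1 = epsA n b i := by linarith
  have hG2 : GamSA b i 1 = epsSA b i := by linarith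
  have hmem1 : (1:ℤ) ∈ (Finset.Icc (1:ℤ) ((n:ℤ)+1-i)).filter
      (fun k => GamA n b i k = epsA n b i) := Finset.mem_filter.mpr ⟨h1mem, hG1⟩
  have hmem1' : (1:ℤ) ∈ (Finset.Icc (1:ℤ) i).filter
      (fun k => GamSA b i k = epsSA b i) := Finset.mem_filter.mpr ⟨h1mem', hG2⟩
  have hmA : mA n b i = 1 := by
    unfold mA
    rw [← Finset.coe_min' ⟨1, hmem1⟩, WithTop.untopD_coe]
    refine le_antisymm (Finset.min'_le _ 1 hmem1) (Finset.le_min' _ _ _ ?_)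
    intro y hy
    exact (Finset.mem_Icc.mp (Finset.mem_filter.mp hy).1).1
  have hmS : mSA b i = 1 := by
    unfold mSA
    rw [← Finset.coe_min' ⟨1, hmem1'⟩, WithTop.untopD_coe]
    refine le_antisymm (Finset.min'_le _ 1 hmem1') (Finset.le_min' _ _ _ ?_)
    intro y hy
    exact (Finset.mem_Icc.mp (Finset.mem_filter.mp hy).1).1
  refine ⟨hmA, hmS, ?_, ?_⟩
  · funext u v
    unfold fA fSA
    rw [hmA, hmS, Finset.Icc_self, Finset.sum_singleton]
    rw [show i + 1 - 1 = i from by ring, show (1:ℤ) - 1 = 0 from rfl]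
    have z : eA n 0 i u v = 0 := by
      unfold eA
      rw [if_neg]
      rintro ⟨-, -, h, -, -⟩
      exact absurd h (by norm_num)
    rw [z]; ring
  · funext u v
    unfold fA; rw [hmA]
end

section
/- Let b ∈ 𝓑(∞) and i ∈ I. Then for 1 ≤ s ≤ i: Γ*^{(i)}_s(f̃_i(b)) = Γ*^{(i)}_s(b) + 1 if m_i(b) = 1 and s = 1, and Γ*^{(i)}_s(f̃_i(b)) = Γ*^{(i)}_s(b) otherwise. Likewise, for 1 ≤ s ≤ n+1−i: Γ^{(i)}_s(f̃*_i(b)) = Γ^{(i)}_s(b) + 1 if m*_i(b) = 1 and s = 1, and Γ^{(i)}_s(f̃*_i(b)) = Γ^{(i)}_s(b) otherwise. -/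
open Finset

lemma argmin_mem (S : Finset ℤ) (hS : S.Nonempty) (f : ℤ → ℤ) :
    WithTop.untopD 0 ((S.filter (fun k => f k = WithBot.unbotD 0 ((S.image f).max))).min) ∈ S := by
  obtain ⟨v, hv⟩ := Finset.max_of_nonempty (hS.image f)
  obtain ⟨k, hk, hfk⟩ := Finset.mem_image.mp (Finset.mem_of_max hv)
  have hval : WithBot.unbotD 0 ((S.image f).max) = v := by rw [hv]; rfl
  have hne : (S.filter (fun k => f k = WithBot.unbotD 0 ((S.image f).max))).Nonempty :=
    ⟨k, Finset.mem_filter.mpr ⟨hk, by rw [hval, hfk]⟩⟩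
  obtain ⟨m, hm⟩ := Finset.min_of_nonempty hne
  have hmmem := Finset.mem_of_min hm
  rw [hm]
  exact (Finset.mem_filter.mp hmmem).1

lemma mA_mem (n : ℕ) (b : ℤ → ℤ → ℤ) (i : ℤ) (h : 1 ≤ (n : ℤ) + 1 - i) :
    mA n b i ∈ Finset.Icc (1 : ℤ) ((n : ℤ) + 1 - i) := by
  have := argmin_mem (Finset.Icc (1 : ℤ) ((n : ℤ) + 1 - i))
    (by rw [Finset.nonempty_Icc]; omega) (GamA n b i)
  unfold mA epsA
  exact this

lemma mSA_mem (b : ℤ → ℤ → ℤ) (i : ℤ) (h : 1 ≤ i) :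
    mSA b i ∈ Finset.Icc (1 : ℤ) i := by
  have := argmin_mem (Finset.Icc (1 : ℤ) i)
    (by rw [Finset.nonempty_Icc]; omega) (GamSA b i)
  unfold mSA epsSA
  exact this

lemma eA_apply (n : ℕ) (s t u v : ℤ) :
    eA n s t u v =
      if u = s ∧ v = t ∧ 1 ≤ s ∧ 1 ≤ t ∧ t ≤ (n : ℤ) ∧ s + t ≤ (n : ℤ) + 1 then 1 else 0 := by
  unfold eA; exact if_congr Iff.rfl rfl rfl

lemma GamSA_add (b c : ℤ → ℤ → ℤ) (i s : ℤ) :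
    GamSA (fun u v => b u v + c u v) i s = GamSA b i s + GamSA c i s := by
  unfold GamSA dsA
  rw [← Finset.sum_add_distrib]
  exact Finset.sum_congr rfl (fun t _ => by ring)

lemma GamA_add (n : ℕ) (b c : ℤ → ℤ → ℤ) (i k : ℤ) :
    GamA n (fun u v => b u v + c u v) i k = GamA n b i k + GamA n c i k := by
  unfold GamA dA
  rw [← Finset.sum_add_distrib]
  exact Finset.sum_congr rfl (fun t _ => by ring)

lemma GamSA_e (n : ℕ) (i m s : ℤ) (hi1 : 1 ≤ i) (hin : i ≤ (n : ℤ)) (hm1 : 1 ≤ m)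
    (hmi : m + i ≤ (n : ℤ) + 1) (hs1 : 1 ≤ s) :
    GamSA (eA n m i) i s = if m = 1 ∧ s = 1 then 1 else 0 := by
  unfold GamSA
  have hpt : ∀ t ∈ Finset.Icc (1 : ℤ) s,
      dsA (eA n m i) t (i + 1 - t)
        = (if t = 1 ∧ m = 1 then (1 : ℤ) else 0) - (if t = 2 ∧ m = 1 then 1 else 0) := by
    intro t ht
    rw [Finset.mem_Icc] at ht
    simp only [dsA, eA_apply]
    split_ifs <;> omega
  rw [Finset.sum_congr rfl hpt]
  by_cases hm : m = 1
  · subst hm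
    simp only [eq_self_iff_true, and_true, true_and]
    rw [Finset.sum_sub_distrib, Finset.sum_ite_eq', Finset.sum_ite_eq']
    simp only [Finset.mem_Icc]
    split_ifs <;> omega
  · rw [if_neg (by tauto), Finset.sum_eq_zero]
    intro t ht
    simp [hm]

lemma GamA_C (n : ℕ) (i M k : ℤ) (hi1 : 1 ≤ i) (hin : i ≤ (n : ℤ)) (hM1 : 1 ≤ M)
    (hMi : M ≤ i) (hk1 : 1 ≤ k) (hk2 : k ≤ (n : ℤ) + 1 - i) :
    GamA n (fun u v => ∑ s ∈ Finset.Icc (1 : ℤ) M,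
        (eA n s (i + 1 - s) u v - eA n (s - 1) (i + 1 - s) u v)) i k
      = if M = 1 ∧ k = 1 then 1 else 0 := by
  unfold GamA
  have hpt : ∀ s' ∈ Finset.Icc k ((n : ℤ) + 1 - i),
      dA (fun u v => ∑ s ∈ Finset.Icc (1 : ℤ) M,
        (eA n s (i + 1 - s) u v - eA n (s - 1) (i + 1 - s) u v)) s' i
        = if s' = 1 ∧ M = 1 then 1 else 0 := by
    intro s' hs'
    rw [Finset.mem_Icc] at hs'
    simp only [dA]
    rw [← Finset.sum_sub_distrib, ← Finset.sum_sub_distrib, ← Finset.sum_add_distrib]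
    have inner : ∀ s ∈ Finset.Icc (1 : ℤ) M,
        (eA n s (i + 1 - s) s' i - eA n (s - 1) (i + 1 - s) s' i)
          - (eA n s (i + 1 - s) s' (i + 1) - eA n (s - 1) (i + 1 - s) s' (i + 1))
          - (eA n s (i + 1 - s) (s' + 1) (i - 1) - eA n (s - 1) (i + 1 - s) (s' + 1) (i - 1))
          + (eA n s (i + 1 - s) (s' + 1) i - eA n (s - 1) (i + 1 - s) (s' + 1) i)
        = (if s = 1 ∧ s' = 1 then (1 : ℤ) else 0) - (if s = 2 ∧ s' = 1 then 1 else 0) := by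
      intro s hs
      rw [Finset.mem_Icc] at hs
      have e1 : eA n s (i + 1 - s) s' i = if s = 1 ∧ s' = 1 then 1 else 0 := by
        rw [eA_apply]; split_ifs <;> omega
      have e2 : eA n (s - 1) (i + 1 - s) s' i = 0 := by
        rw [eA_apply]; split_ifs <;> omega
      have e3 : eA n s (i + 1 - s) s' (i + 1) = 0 := by
        rw [eA_apply]; split_ifs <;> omega
      have e4 : eA n (s - 1) (i + 1 - s) s' (i + 1) = 0 := by
        rw [eA_apply]; split_ifs <;> omega
      have e5 : eA n s (i + 1 - s) (s' + 1) (i - 1) = if s = 2 ∧ s' = 1 then 1 else 0 := by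
        rw [eA_apply]; split_ifs <;> omega
      have e6 : eA n (s - 1) (i + 1 - s) (s' + 1) (i - 1) = 0 := by
        rw [eA_apply]; split_ifs <;> omega
      have e7 : eA n s (i + 1 - s) (s' + 1) i = 0 := by
        rw [eA_apply]; split_ifs <;> omega
      have e8 : eA n (s - 1) (i + 1 - s) (s' + 1) i = 0 := by
        rw [eA_apply]; split_ifs <;> omega
      rw [e1, e2, e3, e4, e5, e6, e7, e8]
      ring
    rw [Finset.sum_congr rfl inner]
    by_cases hs'1 : s' = 1
    · subst hs'1
      simp only [eq_self_iff_true, and_true, true_and]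
      rw [Finset.sum_sub_distrib, Finset.sum_ite_eq', Finset.sum_ite_eq']
      simp only [Finset.mem_Icc]
      split_ifs <;> omega
    · rw [if_neg (by tauto), Finset.sum_eq_zero]
      intro t ht
      simp [hs'1]
  rw [Finset.sum_congr rfl hpt]
  by_cases hM : M = 1
  · subst hM
    simp only [eq_self_iff_true, and_true, true_and]
    rw [Finset.sum_ite_eq']
    simp only [Finset.mem_Icc]
    split_ifs <;> omega
  · rw [if_neg (by tauto), Finset.sum_eq_zero]
    intro t ht
    simp [hM]

/-- `Γ*^{(i)}_s(f̃_i(b))` and `Γ^{(i)}_s(f̃*_i(b))` differ from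
`Γ*^{(i)}_s(b)` resp. `Γ^{(i)}_s(b)` only by `+1` in the single indicated case. -/
theorem stmt9 (n : ℕ) (hn : 1 ≤ n) (i : ℤ) (hi1 : 1 ≤ i) (hin : i ≤ (n : ℤ))
    (b : ℤ → ℤ → ℤ) (hb : b ∈ BinfA n) :
    (∀ s : ℤ, 1 ≤ s → s ≤ i →
        GamSA (fA n b i) i s =
          GamSA b i s + (if mA n b i = 1 ∧ s = 1 then 1 else 0)) ∧
    (∀ s : ℤ, 1 ≤ s → s ≤ (n : ℤ) + 1 - i →
        GamA n (fSA n b i) i s =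
          GamA n b i s + (if mSA b i = 1 ∧ s = 1 then 1 else 0)) := by
  constructor
  · intro s hs1 hs2
    have hmem := mA_mem n b i (by omega)
    rw [Finset.mem_Icc] at hmem
    have hadd : GamSA (fA n b i) i s
        = GamSA b i s + GamSA (eA n (mA n b i) i) i s :=
      GamSA_add b (eA n (mA n b i) i) i s
    rw [hadd, GamSA_e n i (mA n b i) s hi1 hin (by omega) (by omega) hs1]
  · intro k hk1 hk2
    have hmem := mSA_mem b i hi1
    rw [Finset.mem_Icc] at hmem
    have hadd : GamA n (fSA n b i) i k
        = GamA n b i k + GamA n (fun u v => ∑ s ∈ Finset.Icc (1 : ℤ) (mSA b i),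
            (eA n s (i + 1 - s) u v - eA n (s - 1) (i + 1 - s) u v)) i k :=
      GamA_add n b _ i k
    rw [hadd, GamA_C n i (mSA b i) k hi1 hin (by omega) (by omega) hk1 hk2]
end
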